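/- Let g be a finite-dimensional real Lie algebra with universal enveloping algebra U(g), and fix a norm λ : U(g) → ℝ (a norm on the underlying vector space, with no multiplicativity assumed). Then there exists a norm λ' on U(g) such that ‖D · D'‖_λ ≤ ‖D‖_{λ'} · ‖D'‖_{λ'} for all D, D' ∈ U(g). -/

import Mathlib

/-- A norm on the underlying real vector space of `U` (no multiplicativity assumed). -/
def IsVectorNorm (U : Type*) [AddCommGroup U] [Module ℝ U] (n : U → ℝ) : Prop :=
  (∀ x y : U, n (x + y) ≤ n x + n y) ∧
  (∀ (c : ℝ) (x : U), n (c • x) = |c| * n x) ∧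
  (∀ x : U, x ≠ 0 → 0 < n x)

/-!
U(g) has countable dimension, so it has a basis `(b i)` indexed by a countable set. Since a
countable family of numbers `λ(b i * b j)` can be dominated by products `w i * w j` of weights
`w ≥ 1` (take `w n` larger than all `λ(b k * b l)` with `k, l ≤ n`), the weighted ℓ¹ norm
`λ'(∑ cᵢ bᵢ) = ∑ |cᵢ| wᵢ` works: expanding `D * D'` in the basis and using the triangle inequality
for `λ` gives `λ(D * D') ≤ λ'(D) λ'(D')`.
-/

open Cardinal

def IsVectorNorm.toSeminorm {V : Type*} [AddCommGroup V] [Module ℝ V] {n : V → ℝ}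
    (h : IsVectorNorm V n) : Seminorm ℝ V :=
  Seminorm.of n h.1 fun c x => by rw [h.2.1, Real.norm_eq_abs]

namespace Module.Basis

variable {ι V : Type*} [AddCommGroup V] [Module ℝ V] (b : Basis ι ℝ V) (w : ι → ℝ)

noncomputable def weightedL1 (x : V) : ℝ :=
  (b.repr x).sum fun i c => |c| * w i

theorem weightedL1_eq_sum_of_support_subset {x : V} {s : Finset ι}
    (hs : (b.repr x).support ⊆ s) : b.weightedL1 w x = ∑ i ∈ s, |b.repr x i| * w i :=
  Finsupp.sum_of_support_subset _ hs _ fun i _ => by rw [abs_zero, zero_mul]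

theorem isVectorNorm_weightedL1 (hw : ∀ i, 0 < w i) : IsVectorNorm V (b.weightedL1 w) := by
  classical
  refine ⟨fun x y => ?_, fun c x => ?_, fun x hx => ?_⟩
  · have hsupp : (b.repr (x + y)).support ⊆ (b.repr x).support ∪ (b.repr y).support := by
      rw [map_add]; exact Finsupp.support_add
    rw [b.weightedL1_eq_sum_of_support_subset w hsupp,
      b.weightedL1_eq_sum_of_support_subset w Finset.subset_union_left,
      b.weightedL1_eq_sum_of_support_subset w Finset.subset_union_right,
      ← Finset.sum_add_distrib]
    refine Finset.sum_le_sum fun i _ => ?_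
    rw [map_add, Finsupp.add_apply, ← add_mul]
    exact mul_le_mul_of_nonneg_right (abs_add_le _ _) (hw i).le
  · have hsupp : (b.repr (c • x)).support ⊆ (b.repr x).support := by
      rw [map_smul]; exact Finsupp.support_smul
    rw [b.weightedL1_eq_sum_of_support_subset w hsupp, weightedL1, Finsupp.sum, Finset.mul_sum]
    simp only [map_smul, Finsupp.smul_apply, smul_eq_mul, abs_mul, mul_assoc]
  · obtain ⟨i, hi⟩ : ∃ i, b.repr x i ≠ 0 := by
      by_contra! h
      exact hx (b.repr.map_eq_zero_iff.mp (Finsupp.ext h))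
    exact Finset.sum_pos' (fun j _ => mul_nonneg (abs_nonneg _) (hw j).le)
      ⟨i, Finsupp.mem_support_iff.mpr hi, mul_pos (abs_pos.mpr hi) (hw i)⟩

theorem seminorm_apply_le_weightedL1_mul_weightedL1 {W : Type*} [AddCommGroup W] [Module ℝ W]
    (B : V →ₗ[ℝ] V →ₗ[ℝ] W) (p : Seminorm ℝ W)
    (h : ∀ i j, p (B (b i) (b j)) ≤ w i * w j) (x y : V) :
    p (B x y) ≤ b.weightedL1 w x * b.weightedL1 w y := by
  set cx := b.repr x
  set cy := b.repr y
  have hB : B x y = ∑ i ∈ cx.support, ∑ j ∈ cy.support, (cx i * cy j) • B (b i) (b j) := by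
    conv_lhs => rw [← b.linearCombination_repr x, ← b.linearCombination_repr y]
    simp only [Finsupp.linearCombination_apply, Finsupp.sum, map_sum, LinearMap.sum_apply,
      map_smul, LinearMap.smul_apply, Finset.smul_sum, mul_smul]
    rw [Finset.sum_comm]
    exact Finset.sum_congr rfl fun i _ => Finset.sum_congr rfl fun j _ => smul_comm _ _ _
  calc p (B x y)
      ≤ ∑ i ∈ cx.support, ∑ j ∈ cy.support, p ((cx i * cy j) • B (b i) (b j)) := by
        rw [hB]
        refine (Finset.le_sum_of_subadditive p (map_zero p).le (map_add_le_add p) _ _).trans ?_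
        exact Finset.sum_le_sum fun i _ =>
          Finset.le_sum_of_subadditive p (map_zero p).le (map_add_le_add p) _ _
    _ ≤ ∑ i ∈ cx.support, ∑ j ∈ cy.support, (|cx i| * w i) * (|cy j| * w j) := by
        refine Finset.sum_le_sum fun i _ => Finset.sum_le_sum fun j _ => ?_
        rw [map_smul_eq_mul, Real.norm_eq_abs, abs_mul, mul_mul_mul_comm]
        exact mul_le_mul_of_nonneg_left (h i j) (by positivity)
    _ = b.weightedL1 w x * b.weightedL1 w y := (Finset.sum_mul_sum _ _ _ _).symm

end Module.Basis

theorem Nat.exists_one_le_forall_le_mul (F : ℕ → ℕ → ℝ) :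
    ∃ w : ℕ → ℝ, (∀ n, 1 ≤ w n) ∧ ∀ m n, F m n ≤ w m * w n := by
  set w : ℕ → ℝ := fun n => 1 + ∑ q ∈ Finset.range (n + 1) ×ˢ Finset.range (n + 1), |F q.1 q.2|
  have hw : ∀ n, 1 ≤ w n := fun n => le_add_of_nonneg_right (by positivity)
  have hF : ∀ m n, F m n ≤ w (max m n) := fun m n => calc
    F m n ≤ |F m n| := le_abs_self _
    _ ≤ ∑ q ∈ Finset.range (max m n + 1) ×ˢ Finset.range (max m n + 1), |F q.1 q.2| :=
      Finset.single_le_sum (f := fun q : ℕ × ℕ => |F q.1 q.2|) (a := (m, n))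
        (fun _ _ => abs_nonneg _) (Finset.mem_product.mpr
          ⟨Finset.mem_range.mpr (by omega), Finset.mem_range.mpr (by omega)⟩)
    _ ≤ w (max m n) := le_add_of_nonneg_left zero_le_one
  refine ⟨w, hw, fun m n => (hF m n).trans ?_⟩
  rcases le_total m n with hmn | hnm
  · rw [max_eq_right hmn]
    exact le_mul_of_one_le_left (zero_le_one.trans (hw n)) (hw m)
  · rw [max_eq_left hnm]
    exact le_mul_of_one_le_right (zero_le_one.trans (hw m)) (hw n)

theorem exists_one_le_forall_le_mul {ι : Type*} [Countable ι] (F : ι → ι → ℝ) :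
    ∃ w : ι → ℝ, (∀ i, 1 ≤ w i) ∧ ∀ i j, F i j ≤ w i * w j := by
  cases isEmpty_or_nonempty ι
  · exact ⟨1, isEmptyElim, isEmptyElim⟩
  obtain ⟨e, he⟩ := exists_surjective_nat ι
  obtain ⟨v, hv1, hv⟩ := Nat.exists_one_le_forall_le_mul fun m n => F (e m) (e n)
  refine ⟨fun i => v (Function.surjInv he i), fun i => hv1 _, fun i j => ?_⟩
  simpa only [Function.surjInv_eq he] using hv (Function.surjInv he i) (Function.surjInv he j)

theorem UniversalEnvelopingAlgebra.rank_le_aleph0 (R L : Type*) [CommRing R] [Nontrivial R]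
    [LieRing L] [LieAlgebra R L] [Module.Free R L] [Module.Finite R L] :
    Module.rank R (UniversalEnvelopingAlgebra R L) ≤ ℵ₀ := by
  have hT : Module.rank R (TensorAlgebra R L) ≤ ℵ₀ := by
    rw [← lift_le_aleph0, ← (Module.Free.chooseBasis R L).tensorAlgebra.mk_eq_rank, lift_le_aleph0]
    exact mk_le_aleph0
  exact ((mkAlgHom R L).toLinearMap.rank_le_of_surjective
    (RingCon.mkₐ_surjective (α := R) _)).trans hT

theorem exists_isVectorNorm_apply_le_mul {V W : Type*} [AddCommGroup V] [Module ℝ V]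
    [AddCommGroup W] [Module ℝ W] (hV : Module.rank ℝ V ≤ ℵ₀) (B : V →ₗ[ℝ] V →ₗ[ℝ] W)
    (p : Seminorm ℝ W) : ∃ n : V → ℝ, IsVectorNorm V n ∧ ∀ x y, p (B x y) ≤ n x * n y := by
  let b := Module.Basis.ofVectorSpace ℝ V
  have : Countable (Module.Basis.ofVectorSpaceIndex ℝ V) := by
    rw [← mk_le_aleph0_iff, b.mk_eq_rank'']
    exact hV
  obtain ⟨w, hw1, hw⟩ := exists_one_le_forall_le_mul fun i j => p (B (b i) (b j))
  exact ⟨b.weightedL1 w, b.isVectorNorm_weightedL1 w fun i => zero_lt_one.trans_le (hw1 i),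
    b.seminorm_apply_le_weightedL1_mul_weightedL1 w B p hw⟩

theorem exists_submultiplicative_bound
    (L : Type*) [LieRing L] [LieAlgebra ℝ L] [FiniteDimensional ℝ L]
    (lam : UniversalEnvelopingAlgebra ℝ L → ℝ)
    (hlam : IsVectorNorm (UniversalEnvelopingAlgebra ℝ L) lam) :
    ∃ lam' : UniversalEnvelopingAlgebra ℝ L → ℝ,
      IsVectorNorm (UniversalEnvelopingAlgebra ℝ L) lam' ∧
      ∀ D D' : UniversalEnvelopingAlgebra ℝ L, lam (D * D') ≤ lam' D * lam' D' :=
  exists_isVectorNorm_apply_le_mul (UniversalEnvelopingAlgebra.rank_le_aleph0 ℝ L)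
    (LinearMap.mul ℝ _) hlam.toSeminorm
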